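/- Parametrization of the dense orbit of a Bott–Samelson configuration: Let i = (i_1,…,i_l) be a reduced word of w = s_{i_1}⋯s_{i_l} ∈ S_n, let C_k = w_k[i_k] be its chamber sets, and for 1 ≤ k ≤ l set a_k = w_{k−1}(i_k) and b_k = w_{k−1}(i_k+1) (with w_0 = identity). Then: (a) a_k < b_k for every k, and the pairs (a_1,b_1),…,(a_l,b_l) are pairwise distinct — they are exactly the pairs (a,b) with a < b and w^{-1}(a) > w^{-1}(b); (b) the map ℂ^l → Gr(i_1,ℂ^n) × ⋯ × Gr(i_l,ℂ^n) sending t = (t_1,…,t_l) to (g(t)·E_{C_1}, …, g(t)·E_{C_l}), where g(t) = (I + t_1 e_{a_1 b_1})(I + t_2 e_{a_2 b_2})⋯(I + t_l e_{a_l b_l}) and e_{pq} is the matrix unit, is injective. -/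

import Mathlib

open MvPolynomial

noncomputable section

namespace BottSamelson

/-- The initial segment `[j] = {1,…,j}` (1-based), i.e. `{a : Fin n | (a:ℕ) < j}` (0-based). -/
def iseg (n j : ℕ) : Finset (Fin n) := Finset.univ.filter fun a => (a : ℕ) < j

/-- The generic upper-triangular matrix of variables: `X i j = x i j` for `i ≤ j`, else `0`. -/
def Xut (n : ℕ) : Fin n → Fin n → MvPolynomial (Fin n × Fin n) ℂ :=
  fun i j => if i ≤ j then MvPolynomial.X (i, j) else 0

/-- The full generic matrix of variables. -/
def Xfull (n : ℕ) : Fin n → Fin n → MvPolynomial (Fin n × Fin n) ℂ :=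
  fun i j => MvPolynomial.X (i, j)

/-- The minor of `M` on rows `R` and columns `C` (defined to be `0` if `R.card ≠ C.card`). -/
def minorOf {n : ℕ} (M : Fin n → Fin n → MvPolynomial (Fin n × Fin n) ℂ)
    (R C : Finset (Fin n)) : MvPolynomial (Fin n × Fin n) ℂ :=
  if h : R.card = C.card then
    Matrix.det (Matrix.of fun a b : Fin C.card =>
      M (R.orderEmbOfFin h a) (C.orderEmbOfFin rfl b))
  else 0

/-- `R ≤ C` componentwise (including the requirement `|R| = |C|`). -/
def compLE {n : ℕ} (R C : Finset (Fin n)) : Prop :=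
  ∃ h : R.card = C.card, ∀ t : Fin C.card, R.orderEmbOfFin h t ≤ C.orderEmbOfFin rfl t

/-- The flagged Weyl module `M^B_{D,m}`: the span of all products of flagged minors
`∏_k ∏_{t < m k} Δ̃_{D k}^{R k t}` with `R k t ≤ D k` componentwise. -/
def flaggedWeyl {n l : ℕ} (D : Fin l → Finset (Fin n)) (m : Fin l → ℕ) :
    Submodule ℂ (MvPolynomial (Fin n × Fin n) ℂ) :=
  Submodule.span ℂ
    { f | ∃ R : (k : Fin l) → Fin (m k) → Finset (Fin n),
        (∀ k t, compLE (R k t) (D k)) ∧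
        f = ∏ k : Fin l, ∏ t : Fin (m k), minorOf (Xut n) (R k t) (D k) }

/-- The (unflagged) Weyl module `M_{D,m}`: the span of all products of minors of the
full generic matrix with arbitrary row sets of the right cardinality. -/
def weylModule {n l : ℕ} (D : Fin l → Finset (Fin n)) (m : Fin l → ℕ) :
    Submodule ℂ (MvPolynomial (Fin n × Fin n) ℂ) :=
  Submodule.span ℂ
    { f | ∃ R : (k : Fin l) → Fin (m k) → Finset (Fin n),
        (∀ k t, (R k t).card = (D k).card) ∧
        f = ∏ k : Fin l, ∏ t : Fin (m k), minorOf (Xfull n) (R k t) (D k) }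

/-- The row-degree weight: the variable `x i j` has weight the `i`-th standard vector. -/
def rowWeight (n : ℕ) : Fin n × Fin n → (Fin n →₀ ℕ) := fun p => Finsupp.single p.1 1

/-- The dual character of a submodule of the polynomial ring, graded by row degree:
`char* M = Σ_μ dim (M_μ) · x^μ`. -/
def dualChar {n : ℕ} (M : Submodule ℂ (MvPolynomial (Fin n × Fin n) ℂ)) :
    MvPolynomial (Fin n) ℤ :=
  ∑ᶠ μ : Fin n →₀ ℕ,
    MvPolynomial.monomial μ
      ((Module.finrank ℂ
        ↥(M ⊓ MvPolynomial.weightedHomogeneousSubmodule ℂ (rowWeight n) μ) : ℤ))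

/-- The `j`-th column of the Rothe diagram of `w`:
`C_j(w) = {i : i < w⁻¹(j), w(i) > j}`. -/
def rotheCol {n : ℕ} (w : Equiv.Perm (Fin n)) (j : Fin n) : Finset (Fin n) :=
  Finset.univ.filter fun i => i < w.symm j ∧ j < w i

/-- The inversion family `I(w)`: the multiset of the nonempty columns of the Rothe
diagram of `w`, counted with multiplicity. -/
def invFamily {n : ℕ} (w : Equiv.Perm (Fin n)) : Multiset (Finset (Fin n)) :=
  (Finset.univ.val.map fun j => rotheCol w j).filter fun C => C ≠ ∅

/-- The number of inversions (the length) of a permutation. -/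
def invCount {n : ℕ} (w : Equiv.Perm (Fin n)) : ℕ :=
  (Finset.univ.filter fun p : Fin n × Fin n => p.1 < p.2 ∧ w p.2 < w p.1).card

/-- The simple transposition exchanging the (0-based) positions `a` and `a+1`
(the identity if out of range). -/
def sNat (n a : ℕ) : Equiv.Perm (Fin n) :=
  if h : a + 1 < n then Equiv.swap ⟨a, Nat.lt_of_succ_lt h⟩ ⟨a + 1, h⟩ else 1

/-- The product `s_{i_1} ⋯ s_{i_k}` of the first `k` letters of the word `ii`
(letters written 0-based). -/
def wordProd (n : ℕ) {l : ℕ} (ii : Fin l → ℕ) (k : ℕ) : Equiv.Perm (Fin n) :=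
  ((List.ofFn fun t => sNat n (ii t)).take k).prod

/-- The `k`-th chamber set `w_k[i_k]` of the word `ii`. -/
def chamberSet (n : ℕ) {l : ℕ} (ii : Fin l → ℕ) (k : Fin l) : Finset (Fin n) :=
  (iseg n (ii k + 1)).image (wordProd n ii ((k : ℕ) + 1))

/-- The full chamber family `D_i^+ = {[1],…,[n]} ∪ {w_k[i_k]}`. -/
def fullChamberFam (n : ℕ) {l : ℕ} (ii : Fin l → ℕ) : Finset (Finset (Fin n)) :=
  (Finset.univ.image fun j : Fin n => iseg n ((j : ℕ) + 1)) ∪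
    Finset.univ.image (chamberSet n ii)

/-- Two subsets are strongly separated. -/
def stronglySep {n : ℕ} (C C' : Finset (Fin n)) : Prop :=
  (∀ a ∈ C \ C', ∀ b ∈ C' \ C, a < b) ∨ ∀ a ∈ C' \ C, ∀ b ∈ C \ C', a < b

/-- The divided difference operator `∂ f = (f - s f)/(x_i - x_j)`, where `s` swaps the
variables `x_i` and `x_j` (defined as the unique polynomial `g` with
`g·(x_i - x_j) = f - s f`). -/
def divDiff {n : ℕ} (i j : Fin n) (f : MvPolynomial (Fin n) ℤ) : MvPolynomial (Fin n) ℤ :=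
  Classical.epsilon fun g =>
    g * (MvPolynomial.X i - MvPolynomial.X j) = f - MvPolynomial.rename (Equiv.swap i j) f

/-- The isobaric divided difference (Demazure operator)
`Λ f = (x_i f - x_j · s f)/(x_i - x_j)`. -/
def demazure {n : ℕ} (i j : Fin n) (f : MvPolynomial (Fin n) ℤ) : MvPolynomial (Fin n) ℤ :=
  Classical.epsilon fun g =>
    g * (MvPolynomial.X i - MvPolynomial.X j) =
      MvPolynomial.X i * f - MvPolynomial.X j * MvPolynomial.rename (Equiv.swap i j) f

/-- The Demazure operator `Λ_a` for the (0-based) simple reflection `s_a`. -/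
def demazureNat (n a : ℕ) (f : MvPolynomial (Fin n) ℤ) : MvPolynomial (Fin n) ℤ :=
  if h : a + 1 < n then demazure ⟨a, Nat.lt_of_succ_lt h⟩ ⟨a + 1, h⟩ f else f

/-- The divided difference `∂_a` for the (0-based) simple reflection `s_a`. -/
def divDiffNat (n a : ℕ) (f : MvPolynomial (Fin n) ℤ) : MvPolynomial (Fin n) ℤ :=
  if h : a + 1 < n then divDiff ⟨a, Nat.lt_of_succ_lt h⟩ ⟨a + 1, h⟩ f else f

/-- The fundamental weight `ϖ_j = x_1 x_2 ⋯ x_j` (`j` counted 1-based). -/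
def varpi (n j : ℕ) : MvPolynomial (Fin n) ℤ := ∏ t ∈ iseg n j, MvPolynomial.X t

/-- The nested Demazure expression `Λ_{a_1}(ϖ_{a_1}^{m_1}·Λ_{a_2}(⋯ Λ_{a_l}(ϖ_{a_l}^{m_l})⋯))`,
letters written 0-based. -/
def demazureWord (n : ℕ) : List (ℕ × ℕ) → MvPolynomial (Fin n) ℤ
  | [] => 1
  | (a, m) :: rest => demazureNat n a (varpi n (a + 1) ^ m * demazureWord n rest)

/-- The successor in `Fin n` (fixing the top element). -/
def next {n : ℕ} (a : Fin n) : Fin n := if h : (a : ℕ) + 1 < n then ⟨a + 1, h⟩ else a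

/-- The set of ascents of a permutation. -/
def ascents {n : ℕ} (w : Equiv.Perm (Fin n)) : Finset (Fin n) :=
  Finset.univ.filter fun a => w a < w (next a)

/-- The staircase monomial `x_1^{n-1} x_2^{n-2} ⋯ x_{n-1}`. -/
def staircase (n : ℕ) : MvPolynomial (Fin n) ℤ :=
  ∏ i : Fin n, MvPolynomial.X i ^ (n - 1 - (i : ℕ))

/-- Auxiliary recursion for the Schubert polynomial along first ascents. -/
def schubertAux (n : ℕ) : ℕ → Equiv.Perm (Fin n) → MvPolynomial (Fin n) ℤ
  | 0, _ => staircase n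
  | fuel + 1, w =>
    if h : (ascents w).Nonempty then
      divDiff ((ascents w).min' h) (next ((ascents w).min' h))
        (schubertAux n fuel (w * Equiv.swap ((ascents w).min' h) (next ((ascents w).min' h))))
    else staircase n

/-- The Schubert polynomial `𝔖(w)`, defined by
`𝔖(w₀) = x_1^{n-1}⋯x_{n-1}` and `𝔖(w) = ∂_i 𝔖(w s_i)` for `i` the first ascent of `w`. -/
def schubert {n : ℕ} (w : Equiv.Perm (Fin n)) : MvPolynomial (Fin n) ℤ :=
  schubertAux n (n * n) w

/-- The general linear group `GL(n, ℂ)`. -/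
abbrev GLn (n : ℕ) := Matrix.GeneralLinearGroup (Fin n) ℂ

/-- Membership in the Borel subgroup `B` of upper-triangular matrices. -/
def upperTri {n : ℕ} (g : GLn n) : Prop :=
  ∀ i j : Fin n, j < i → (g : Matrix (Fin n) (Fin n) ℂ) i j = 0

/-- The coordinate subspace `E_C = span{e_j : j ∈ C} ⊆ ℂⁿ`. -/
def coordSub {n : ℕ} (C : Finset (Fin n)) : Submodule ℂ (Fin n → ℂ) :=
  Submodule.span ℂ ((fun j => (Pi.single j 1 : Fin n → ℂ)) '' (C : Set (Fin n)))

/-- The image subspace `A·V` of a subspace under a matrix. -/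
def mapSub {n : ℕ} (A : Matrix (Fin n) (Fin n) ℂ) (V : Submodule ℂ (Fin n → ℂ)) :
    Submodule ℂ (Fin n → ℂ) :=
  Submodule.map (Matrix.toLin' A) V

/-- Lexicographic order on subsets: the smallest element of the symmetric difference
belongs to `C`. -/
def lexLT {n : ℕ} (C C' : Finset (Fin n)) : Prop :=
  ∃ a : Fin n, IsLeast (↑(C \ C' ∪ C' \ C) : Set (Fin n)) a ∧ a ∈ C

section AuxLemmas

variable {n : ℕ}

def invSet (w : Equiv.Perm (Fin n)) : Finset (Fin n × Fin n) :=
  Finset.univ.filter fun p : Fin n × Fin n => p.1 < p.2 ∧ w p.2 < w p.1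

lemma invCount_eq (w : Equiv.Perm (Fin n)) : invCount w = (invSet w).card := rfl

lemma mem_invSet {w : Equiv.Perm (Fin n)} {p : Fin n × Fin n} :
    p ∈ invSet w ↔ p.1 < p.2 ∧ w p.2 < w p.1 := by
  simp [invSet]

lemma invCount_inv (w : Equiv.Perm (Fin n)) : invCount w⁻¹ = invCount w := by
  rw [invCount_eq, invCount_eq]
  apply Finset.card_nbij' (i := fun p => (w⁻¹ p.2, w⁻¹ p.1)) (j := fun p => (w p.2, w p.1))
  · intro p hp
    simp only [Finset.mem_coe] at hp ⊢
    rw [mem_invSet] at hp ⊢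
    simp only [Equiv.Perm.inv_def, Equiv.apply_symm_apply]
    exact ⟨hp.2, hp.1⟩
  · intro p hp
    simp only [Finset.mem_coe] at hp ⊢
    rw [mem_invSet] at hp ⊢
    simp only [Equiv.Perm.inv_def, Equiv.symm_apply_apply]
    exact ⟨hp.2, hp.1⟩
  · intro p hp; simp
  · intro p hp; simp

lemma invCount_one : invCount (1 : Equiv.Perm (Fin n)) = 0 := by
  rw [invCount_eq]
  apply Finset.card_eq_zero.2
  ext p
  simp only [mem_invSet, Finset.notMem_empty, iff_false, not_and]
  intro h
  simp only [Equiv.Perm.one_apply]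
  exact not_lt.2 h.le

lemma invCount_mul_le (x y : Equiv.Perm (Fin n)) :
    invCount (x * y) ≤ invCount x + invCount y := by
  rw [invCount_eq, invCount_eq, invCount_eq]
  have hsplit : invSet (x * y) =
      (invSet (x * y)).filter (fun p => y p.1 < y p.2) ∪
      (invSet (x * y)).filter (fun p => ¬ y p.1 < y p.2) :=
    (Finset.filter_union_filter_not_eq _ _).symm
  rw [hsplit]
  refine le_trans (Finset.card_union_le _ _) (Nat.add_le_add ?_ ?_)
  · apply Finset.card_le_card_of_injOn (fun p => (y p.1, y p.2))
    · intro p hp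
      simp only [Finset.mem_coe, Finset.mem_filter, mem_invSet] at hp
      rw [Finset.mem_coe, mem_invSet]
      refine ⟨hp.2, ?_⟩
      simpa [Equiv.Perm.mul_apply] using hp.1.2
    · intro p hp q hq h
      simp only [Prod.mk.injEq] at h
      exact Prod.ext (y.injective h.1) (y.injective h.2)
  · apply Finset.card_le_card
    intro p hp
    simp only [Finset.mem_filter, mem_invSet, not_lt] at hp
    rw [mem_invSet]
    refine ⟨hp.1.1, lt_of_le_of_ne hp.2 ?_⟩
    intro h
    exact absurd (y.injective h) (ne_of_gt hp.1.1)

variable {n : ℕ}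



lemma swap_adj_lt {a b p q : Fin n} (hab : (a:ℕ)+1 = b) (hpq : p < q)
    (hne : ¬(p = a ∧ q = b)) : Equiv.swap a b p < Equiv.swap a b q := by
  have hab' : a < b := by rw [Fin.lt_def]; omega
  by_cases hp : p = a
  · have hq : q ≠ b := fun h => hne ⟨hp, h⟩
    have hq' : q ≠ a := hp ▸ (ne_of_gt hpq)
    rw [hp, Equiv.swap_apply_left, Equiv.swap_apply_of_ne_of_ne hq' hq]
    rw [Fin.lt_def] at hpq ⊢
    rw [Fin.ext_iff] at hp
    have hq2 : (q:ℕ) ≠ b := fun h => hq (Fin.ext h)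
    omega
  · by_cases hpb : p = b
    · have hqa : q ≠ a := by
        intro h
        rw [hpb, h] at hpq
        exact absurd hpq (not_lt.2 hab'.le)
      have hqb : q ≠ b := hpb ▸ (ne_of_gt hpq)
      rw [hpb, Equiv.swap_apply_right, Equiv.swap_apply_of_ne_of_ne hqa hqb]
      exact lt_trans hab' (hpb ▸ hpq)
    · by_cases hqa : q = a
      · rw [hqa, Equiv.swap_apply_of_ne_of_ne hp hpb, Equiv.swap_apply_left]
        exact lt_trans (hqa ▸ hpq) hab'
      · by_cases hqb : q = b
        · rw [hqb, Equiv.swap_apply_of_ne_of_ne hp hpb, Equiv.swap_apply_right]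
          rw [Fin.lt_def] at hpq ⊢
          rw [Fin.ext_iff] at hqb
          have hp2 : (p:ℕ) ≠ a := fun h => hp (Fin.ext h)
          omega
        · rw [Equiv.swap_apply_of_ne_of_ne hp hpb, Equiv.swap_apply_of_ne_of_ne hqa hqb]
          exact hpq

lemma card_erase_aux (u : Equiv.Perm (Fin n)) {a b : Fin n} (hab : (a:ℕ)+1 = b) :
    ((invSet (u * Equiv.swap a b)).erase (a,b)).card = ((invSet u).erase (a,b)).card := by
  have hab' : a < b := by rw [Fin.lt_def]; omega
  have hmap : ∀ p q : Fin n, p < q → ¬(p = a ∧ q = b) →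
      ¬(Equiv.swap a b p = a ∧ Equiv.swap a b q = b) := by
    intro p q hpq h contra
    have hp : p = b := by
      have := congrArg (Equiv.swap a b) contra.1
      simpa [Equiv.swap_apply_self, Equiv.swap_apply_left] using this
    have hq : q = a := by
      have := congrArg (Equiv.swap a b) contra.2
      simpa [Equiv.swap_apply_self, Equiv.swap_apply_right] using this
    rw [hp, hq] at hpq
    exact absurd hpq (not_lt.2 hab'.le)
  apply Finset.card_nbij' (i := fun p => (Equiv.swap a b p.1, Equiv.swap a b p.2))
    (j := fun p => (Equiv.swap a b p.1, Equiv.swap a b p.2))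
  · intro p hp
    rw [Finset.mem_coe, Finset.mem_erase, mem_invSet] at hp
    obtain ⟨hne, hlt, hinv⟩ := hp
    have hne' : ¬(p.1 = a ∧ p.2 = b) := by
      intro h; exact hne (Prod.ext h.1 h.2)
    rw [Finset.mem_coe, Finset.mem_erase, mem_invSet]
    refine ⟨?_, swap_adj_lt hab hlt hne', ?_⟩
    · intro h
      rw [Prod.ext_iff] at h
      exact hmap _ _ hlt hne' ⟨h.1, h.2⟩
    · simpa [Equiv.Perm.mul_apply] using hinv
  · intro p hp
    rw [Finset.mem_coe, Finset.mem_erase, mem_invSet] at hp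
    obtain ⟨hne, hlt, hinv⟩ := hp
    have hne' : ¬(p.1 = a ∧ p.2 = b) := by
      intro h; exact hne (Prod.ext h.1 h.2)
    rw [Finset.mem_coe, Finset.mem_erase, mem_invSet]
    refine ⟨?_, swap_adj_lt hab hlt hne', ?_⟩
    · intro h
      rw [Prod.ext_iff] at h
      exact hmap _ _ hlt hne' ⟨h.1, h.2⟩
    · simpa [Equiv.Perm.mul_apply, Equiv.swap_apply_self] using hinv
  · intro p hp; simp [Equiv.swap_apply_self]
  · intro p hp; simp [Equiv.swap_apply_self]

lemma invCount_mul_swap_of_lt (u : Equiv.Perm (Fin n)) {a b : Fin n} (hab : (a:ℕ)+1 = b)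
    (h : u a < u b) : invCount (u * Equiv.swap a b) = invCount u + 1 := by
  have hab' : a < b := by rw [Fin.lt_def]; omega
  have hmem : (a, b) ∈ invSet (u * Equiv.swap a b) := by
    rw [mem_invSet]
    refine ⟨hab', ?_⟩
    simpa [Equiv.Perm.mul_apply, Equiv.swap_apply_left, Equiv.swap_apply_right] using h
  have hmem' : (a, b) ∉ invSet u := by
    rw [mem_invSet]
    push_neg
    intro _
    exact h.le
  rw [invCount_eq, invCount_eq, ← Finset.card_erase_add_one hmem, card_erase_aux u hab,
    Finset.erase_eq_of_notMem hmem']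

lemma invCount_mul_swap_of_gt (u : Equiv.Perm (Fin n)) {a b : Fin n} (hab : (a:ℕ)+1 = b)
    (h : u b < u a) : invCount u = invCount (u * Equiv.swap a b) + 1 := by
  have hab' : a < b := by rw [Fin.lt_def]; omega
  have hmem : (a, b) ∈ invSet u := mem_invSet.2 ⟨hab', h⟩
  have hmem' : (a, b) ∉ invSet (u * Equiv.swap a b) := by
    rw [mem_invSet]
    push_neg
    intro _
    simpa [Equiv.Perm.mul_apply, Equiv.swap_apply_left, Equiv.swap_apply_right] using h.le
  rw [invCount_eq, invCount_eq, ← Finset.card_erase_add_one hmem, ← card_erase_aux u hab,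
    Finset.erase_eq_of_notMem hmem']

lemma invCount_mul_swap_le (u : Equiv.Perm (Fin n)) {a b : Fin n} (hab : (a:ℕ)+1 = b) :
    invCount (u * Equiv.swap a b) ≤ invCount u + 1 := by
  have hne : a ≠ b := fun h => by rw [Fin.ext_iff] at h; omega
  rcases lt_or_gt_of_ne (fun h => hne (u.injective h) : u a ≠ u b) with h | h
  · exact (invCount_mul_swap_of_lt u hab h).le
  · rw [invCount_mul_swap_of_gt u hab h]; omega

lemma lt_of_invCount_mul_swap_eq (u : Equiv.Perm (Fin n)) {a b : Fin n} (hab : (a:ℕ)+1 = b)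
    (h : invCount (u * Equiv.swap a b) = invCount u + 1) : u a < u b := by
  have hne : a ≠ b := fun h => by rw [Fin.ext_iff] at h; omega
  rcases lt_or_gt_of_ne (fun h' => hne (u.injective h') : u a ≠ u b) with h' | h'
  · exact h'
  · have := invCount_mul_swap_of_gt u hab h'
    omega



section Word
variable {n l : ℕ} (aa : Fin l → ℕ)

lemma sNat_eq {a : ℕ} (h : a + 1 < n) :
    sNat n a = Equiv.swap ⟨a, Nat.lt_of_succ_lt h⟩ ⟨a + 1, h⟩ := dif_pos h

lemma wordProd_succ {k : ℕ} (hk : k < l) :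
    wordProd n aa (k + 1) = wordProd n aa k * sNat n (aa ⟨k, hk⟩) := by
  unfold wordProd
  rw [List.prod_take_succ _ _ (by simpa using hk)]
  congr 1
  simp

lemma wordProd_stab {k : ℕ} (hk : l ≤ k) : wordProd n aa k = wordProd n aa l := by
  unfold wordProd
  rw [List.take_of_length_le (by simpa using hk), List.take_of_length_le (by simp)]

/-- The segment permutation: product of letters j..k-1. -/
def seg (j k : ℕ) : Equiv.Perm (Fin n) := (wordProd n aa j)⁻¹ * wordProd n aa k

lemma seg_self (j : ℕ) : seg aa j j = (1 : Equiv.Perm (Fin n)) := by simp [seg]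

lemma seg_zero (k : ℕ) : seg aa 0 k = wordProd n aa k := by
  simp [seg, wordProd]

lemma seg_mul (j k m : ℕ) : seg aa j k * seg aa k m = seg (n := n) aa j m := by
  simp [seg, mul_assoc]

lemma seg_succ (j : ℕ) {k : ℕ} (hk : k < l) :
    seg aa j (k+1) = seg (n := n) aa j k * sNat n (aa ⟨k, hk⟩) := by
  simp [seg, wordProd_succ aa hk, mul_assoc]

lemma invCount_seg_le (haa : ∀ k, aa k + 1 < n) (j : ℕ) :
    ∀ k, j ≤ k → invCount (seg aa (n := n) j k) ≤ k - j := by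
  intro k
  induction k with
  | zero => intro hj; simp only [Nat.le_zero] at hj; subst hj; simp [seg_self, invCount_one]
  | succ k ih =>
    intro hj
    rcases Nat.eq_or_lt_of_le hj with rfl | hj'
    · simp [seg_self, invCount_one]
    · have hj2 : j ≤ k := Nat.lt_succ_iff.mp hj'
      rcases Nat.lt_or_ge k l with hk | hk
      · rw [seg_succ aa j hk, sNat_eq (haa _)]
        have := invCount_mul_swap_le (seg aa (n := n) j k)
          (a := ⟨aa ⟨k, hk⟩, Nat.lt_of_succ_lt (haa _)⟩) (b := ⟨aa ⟨k, hk⟩ + 1, haa _⟩) rfl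
        have h2 := ih hj2
        omega
      · have hw : wordProd n aa (k+1) = wordProd n aa k := by
          rw [wordProd_stab aa (by omega), wordProd_stab aa hk]
        have h2 := ih hj2
        unfold seg at h2 ⊢
        rw [hw]
        omega

lemma invCount_seg_eq (haa : ∀ k, aa k + 1 < n)
    (hred : invCount (wordProd n aa l) = l) {j k : ℕ} (hj : j ≤ k) (hk : k ≤ l) :
    invCount (seg aa (n := n) j k) = k - j := by
  have h1 : invCount (seg aa (n := n) j k) ≤ k - j := invCount_seg_le aa haa j k hj
  have hw : wordProd n aa l = wordProd n aa j * (seg aa j k * seg aa k l) := by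
    simp [seg, mul_assoc]
  have h2 : l ≤ invCount (wordProd n aa j) + (invCount (seg aa (n := n) j k)
      + invCount (seg aa (n := n) k l)) := by
    calc l = invCount (wordProd n aa l) := hred.symm
    _ ≤ _ := by
      rw [hw]
      exact le_trans (invCount_mul_le _ _)
        (by exact Nat.add_le_add_left (invCount_mul_le _ _) _)
  have h3 : invCount (wordProd n aa j) ≤ j := by
    have := invCount_seg_le aa haa 0 j (Nat.zero_le j)
    rwa [seg_zero, Nat.sub_zero] at this
  have h4 : invCount (seg aa (n := n) k l) ≤ l - k := invCount_seg_le aa haa k l hk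
  omega

/-- The key ascent lemma: in a reduced word, every middle segment ascends at the next letter. -/
lemma mid_ascent (haa : ∀ k, aa k + 1 < n)
    (hred : invCount (wordProd n aa l) = l) {j k : ℕ} (hj : j ≤ k) (hk : k < l) :
    seg aa (n := n) j k ⟨aa ⟨k, hk⟩, Nat.lt_of_succ_lt (haa _)⟩ <
      seg aa (n := n) j k ⟨aa ⟨k, hk⟩ + 1, haa _⟩ := by
  apply lt_of_invCount_mul_swap_eq _ rfl
  rw [← sNat_eq (haa ⟨k, hk⟩), ← seg_succ aa j hk,
    invCount_seg_eq aa haa hred hj hk.le,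
    invCount_seg_eq aa haa hred (le_trans hj (Nat.le_succ k)) hk]
  omega

end Word




section A
variable {n l : ℕ} (aa : Fin l → ℕ)
lemma prefix_ascent (haa : ∀ k, aa k + 1 < n) (hred : invCount (wordProd n aa l) = l)
    (k : Fin l) :
    (wordProd n aa (k : ℕ)) ⟨aa k, Nat.lt_of_succ_lt (haa k)⟩ <
      (wordProd n aa (k : ℕ)) ⟨aa k + 1, haa k⟩ := by
  have := mid_ascent aa haa hred (Nat.zero_le (k : ℕ)) k.isLt
  rwa [seg_zero, Fin.eta] at this

lemma swap_fact (haa : ∀ k, aa k + 1 < n) (k : Fin l) :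
    wordProd n aa ((k:ℕ) + 1) = wordProd n aa (k:ℕ) *
      Equiv.swap (⟨aa k, Nat.lt_of_succ_lt (haa k)⟩ : Fin n) ⟨aa k + 1, haa k⟩ := by
  rw [wordProd_succ aa k.isLt]
  congr 1
  simp only [Fin.eta]
  exact sNat_eq (haa k)

lemma pair_inj_aux (haa : ∀ k, aa k + 1 < n) (hred : invCount (wordProd n aa l) = l)
    (j k : Fin l) (hjk : (j:ℕ) < (k:ℕ))
    (h1 : (wordProd n aa (j : ℕ)) ⟨aa j, Nat.lt_of_succ_lt (haa j)⟩ =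
      (wordProd n aa (k : ℕ)) ⟨aa k, Nat.lt_of_succ_lt (haa k)⟩)
    (h2 : (wordProd n aa (j : ℕ)) ⟨aa j + 1, haa j⟩ =
      (wordProd n aa (k : ℕ)) ⟨aa k + 1, haa k⟩) : False := by
  have hk1 : wordProd n aa ((k : ℕ) + 1) =
      wordProd n aa (j : ℕ) * seg aa ((j : ℕ)+1) (k : ℕ) := by
    rw [swap_fact aa haa k, Equiv.mul_swap_eq_swap_mul, ← h1, ← h2, Equiv.swap_apply_apply]
    show _ = _ * ((wordProd n aa ((j:ℕ)+1))⁻¹ * wordProd n aa (k:ℕ))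
    rw [swap_fact aa haa j, mul_inv_rev, Equiv.swap_inv]
    group
  have c1 : invCount (wordProd n aa ((k:ℕ)+1)) = (k:ℕ)+1 := by
    have := invCount_seg_eq aa haa hred (Nat.zero_le ((k:ℕ)+1)) k.isLt
    rwa [seg_zero, Nat.sub_zero] at this
  have c2 : invCount (wordProd n aa (j:ℕ)) ≤ (j:ℕ) := by
    have := invCount_seg_eq aa haa hred (Nat.zero_le (j:ℕ)) (le_of_lt (lt_trans hjk k.isLt))
    rw [seg_zero, Nat.sub_zero] at this
    omega
  have c3 : invCount (seg (n := n) aa ((j:ℕ)+1) (k:ℕ)) ≤ (k:ℕ) - ((j:ℕ)+1) := by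
    have := invCount_seg_eq aa haa hred (k := (k:ℕ)) (j := (j:ℕ)+1) hjk (le_of_lt k.isLt)
    omega
  have := invCount_mul_le (wordProd n aa (j:ℕ)) (seg aa ((j:ℕ)+1) (k:ℕ))
  rw [← hk1, c1] at this
  omega

lemma pair_injective (haa : ∀ k, aa k + 1 < n) (hred : invCount (wordProd n aa l) = l) :
    Function.Injective (fun k : Fin l =>
    (((wordProd n aa (k : ℕ)) ⟨aa k, Nat.lt_of_succ_lt (haa k)⟩ : Fin n),
      ((wordProd n aa (k : ℕ)) ⟨aa k + 1, haa k⟩ : Fin n))) := by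
  intro j k h
  simp only [Prod.mk.injEq] at h
  rcases lt_trichotomy (j:ℕ) (k:ℕ) with hlt | heq | hgt
  · exact absurd (pair_inj_aux aa haa hred j k hlt h.1 h.2) id
  · exact Fin.ext heq
  · exact absurd (pair_inj_aux aa haa hred k j hgt h.1.symm h.2.symm) id

lemma pair_mem_inv (haa : ∀ k, aa k + 1 < n) (hred : invCount (wordProd n aa l) = l)
    (k : Fin l) :
    (wordProd n aa l).symm ((wordProd n aa (k : ℕ)) ⟨aa k + 1, haa k⟩) <
      (wordProd n aa l).symm ((wordProd n aa (k : ℕ)) ⟨aa k, Nat.lt_of_succ_lt (haa k)⟩) := by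
  set xk : Fin n := ⟨aa k, Nat.lt_of_succ_lt (haa k)⟩
  set yk : Fin n := ⟨aa k + 1, haa k⟩
  set v : Equiv.Perm (Fin n) := seg aa ((k:ℕ)+1) l with hv
  have e2 : Equiv.swap xk yk * v = seg aa (k:ℕ) l := by
    rw [hv, ← seg_mul aa (k:ℕ) ((k:ℕ)+1) l]
    congr 1
    show _ = (wordProd n aa (k:ℕ))⁻¹ * wordProd n aa ((k:ℕ)+1)
    rw [swap_fact aa haa k]
    group
    exact congrArg (Equiv.swap xk) (Fin.ext (show aa k + 1 = 1 + aa k by omega))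
  have hw : wordProd n aa l = wordProd n aa (k:ℕ) * (Equiv.swap xk yk * v) := by
    rw [e2]
    show _ = wordProd n aa (k:ℕ) * ((wordProd n aa (k:ℕ))⁻¹ * wordProd n aa l)
    group
  have hsymm : ∀ z : Fin n, (wordProd n aa l).symm ((wordProd n aa (k:ℕ)) z)
      = v⁻¹ (Equiv.swap xk yk z) := by
    intro z
    rw [hw, Equiv.symm_apply_eq]
    simp only [Equiv.Perm.mul_apply]
    rw [show (v⁻¹ : Equiv.Perm (Fin n)) (Equiv.swap xk yk z) =
      v.symm (Equiv.swap xk yk z) from rfl]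
    rw [Equiv.apply_symm_apply, Equiv.swap_apply_self]
  rw [hsymm, hsymm, Equiv.swap_apply_left, Equiv.swap_apply_right]
  apply lt_of_invCount_mul_swap_eq (v⁻¹) (a := xk) (b := yk) rfl
  have e1 : v⁻¹ * Equiv.swap xk yk = (Equiv.swap xk yk * v)⁻¹ := by
    rw [mul_inv_rev, Equiv.swap_inv]
  have cv : invCount (v⁻¹) = l - ((k:ℕ)+1) := by
    rw [invCount_inv, hv]
    exact invCount_seg_eq aa haa hred k.isLt le_rfl
  have cs : invCount ((Equiv.swap xk yk * v)⁻¹) = l - (k:ℕ) := by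
    rw [invCount_inv, e2]
    exact invCount_seg_eq aa haa hred (le_of_lt k.isLt) le_rfl
  rw [e1, cs, cv]
  have := k.isLt
  omega

lemma pair_range (haa : ∀ k, aa k + 1 < n) (hred : invCount (wordProd n aa l) = l) :
    Set.range (fun k : Fin l =>
        (((wordProd n aa (k : ℕ)) ⟨aa k, Nat.lt_of_succ_lt (haa k)⟩ : Fin n),
          ((wordProd n aa (k : ℕ)) ⟨aa k + 1, haa k⟩ : Fin n)))
      = {pr : Fin n × Fin n | pr.1 < pr.2 ∧
          (wordProd n aa l).symm pr.2 < (wordProd n aa l).symm pr.1} := by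
  set S : Finset (Fin n × Fin n) := Finset.univ.filter
    (fun pr : Fin n × Fin n => pr.1 < pr.2 ∧
      (wordProd n aa l).symm pr.2 < (wordProd n aa l).symm pr.1) with hS
  have hcard : S.card = l := by
    have h1 : S.card = invCount (wordProd n aa l)⁻¹ := rfl
    rw [h1, invCount_inv]
    exact hred
  set F := fun k : Fin l =>
    (((wordProd n aa (k : ℕ)) ⟨aa k, Nat.lt_of_succ_lt (haa k)⟩ : Fin n),
      ((wordProd n aa (k : ℕ)) ⟨aa k + 1, haa k⟩ : Fin n)) with hF
  have hmem : ∀ k, F k ∈ S := by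
    intro k
    rw [hS, Finset.mem_filter]
    exact ⟨Finset.mem_univ _, prefix_ascent aa haa hred k, pair_mem_inv aa haa hred k⟩
  have hsurj : ∀ p ∈ S, ∃ k, F k = p := by
    set F' : Fin l → {x // x ∈ S} := fun k => ⟨F k, hmem k⟩ with hF'
    have hinj : Function.Injective F' := by
      intro a b hab
      exact pair_injective aa haa hred (congrArg Subtype.val hab)
    have hbij : Function.Bijective F' := by
      rw [Fintype.bijective_iff_injective_and_card]
      refine ⟨hinj, ?_⟩
      simp [Fintype.card_coe, hcard]
    intro p hp
    obtain ⟨k, hk⟩ := hbij.2 ⟨p, hp⟩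
    exact ⟨k, congrArg Subtype.val hk⟩
  ext p
  constructor
  · rintro ⟨k, rfl⟩
    have := hmem k
    rw [hS, Finset.mem_filter] at this
    exact this.2
  · intro hp
    have hp' : p ∈ S := by
      rw [hS, Finset.mem_filter]
      exact ⟨Finset.mem_univ _, hp⟩
    obtain ⟨k, hk⟩ := hsurj p hp'
    exact ⟨k, hk⟩
end A


variable {n : ℕ}

lemma mapSub_one (V : Submodule ℂ (Fin n → ℂ)) : mapSub 1 V = V := by
  rw [mapSub, Matrix.toLin'_one, Submodule.map_id]

lemma mapSub_mul (A B : Matrix (Fin n) (Fin n) ℂ) (V : Submodule ℂ (Fin n → ℂ)) :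
    mapSub (A * B) V = mapSub A (mapSub B V) := by
  rw [mapSub, mapSub, mapSub, Matrix.toLin'_mul, Submodule.map_comp]

lemma coordSub_apply_eq_zero {C : Finset (Fin n)} {x : Fin n → ℂ} (hx : x ∈ coordSub C)
    {j : Fin n} (hj : j ∉ C) : x j = 0 := by
  have hle : coordSub C ≤ LinearMap.ker (LinearMap.proj (R := ℂ) (φ := fun _ : Fin n => ℂ) j) := by
    rw [coordSub, Submodule.span_le]
    rintro _ ⟨i, hi, rfl⟩
    simp only [SetLike.mem_coe, LinearMap.mem_ker, LinearMap.proj_apply]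
    exact Pi.single_eq_of_ne (fun h => hj (by rw [h]; exact Finset.mem_coe.mp hi)) 1
  simpa using hle hx

lemma single_mem_coordSub {C : Finset (Fin n)} {j : Fin n} (hj : j ∈ C) :
    (Pi.single j 1 : Fin n → ℂ) ∈ coordSub C :=
  Submodule.subset_span ⟨j, hj, rfl⟩

/-- The elementary matrix `1 + t e_{ab}`. -/
def elemMat (t : ℂ) (a b : Fin n) : Matrix (Fin n) (Fin n) ℂ :=
  1 + t • Matrix.single a b (1 : ℂ)

lemma toLin'_elemMat (t : ℂ) (a b : Fin n) (x : Fin n → ℂ) :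
    Matrix.toLin' (elemMat t a b) x = x + (t * x b) • (Pi.single a 1 : Fin n → ℂ) := by
  funext i
  rw [Matrix.toLin'_apply, elemMat, Matrix.add_mulVec, Matrix.one_mulVec,
    Matrix.smul_mulVec]
  have hS : Matrix.mulVec (Matrix.single a b (1:ℂ)) x i = if a = i then x b else 0 := by
    simp only [Matrix.mulVec, dotProduct, Matrix.single, Matrix.of_apply]
    rw [Finset.sum_eq_single b]
    · simp
    · intro c _ hc
      simp [Ne.symm hc]
    · simp
  simp only [Pi.add_apply, Pi.smul_apply, smul_eq_mul, hS]
  by_cases h : a = i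
  · subst h
    rw [Pi.single_eq_same, if_pos rfl]
    ring
  · rw [if_neg h, Pi.single_eq_of_ne (fun hh => h hh.symm)]
    ring

lemma isUnit_elemMat {t : ℂ} {a b : Fin n} (hab : a ≠ b) : IsUnit (elemMat t a b) := by
  have hE : Matrix.single a b (1:ℂ) * Matrix.single a b (1:ℂ) = 0 :=
    Matrix.single_mul_single_of_ne (1:ℂ) a b a (Ne.symm hab) (1:ℂ)
  have key : ∀ s s' : ℂ, elemMat s a b * elemMat s' a b = elemMat (s + s') a b := by
    intro s s'
    rw [elemMat, elemMat, elemMat, add_mul, mul_add, mul_add, one_mul, mul_one,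
      Matrix.smul_mul, one_mul, Matrix.mul_smul, hE, smul_zero, smul_zero, add_smul]
    abel
  have hmul : elemMat t a b * elemMat (-t) a b = 1 := by
    rw [key, add_neg_cancel]
    simp [elemMat]
  have hmul2 : elemMat (-t) a b * elemMat t a b = 1 := by
    rw [key, neg_add_cancel]
    simp [elemMat]
  exact ⟨⟨elemMat t a b, elemMat (-t) a b, hmul, hmul2⟩, rfl⟩

lemma injective_toLin'_of_isUnit {M : Matrix (Fin n) (Fin n) ℂ} (hM : IsUnit M) :
    Function.Injective (Matrix.toLin' M) := by
  obtain ⟨u, hu⟩ := hM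
  intro x y hxy
  have h1 : (↑u⁻¹ : Matrix (Fin n) (Fin n) ℂ) * M = 1 := by
    rw [← hu]; exact u.inv_mul
  have := congrArg (Matrix.toLin' (↑u⁻¹ : Matrix (Fin n) (Fin n) ℂ)) hxy
  rwa [← Matrix.toLin'_mul_apply, ← Matrix.toLin'_mul_apply, h1, Matrix.toLin'_one,
    LinearMap.id_apply, LinearMap.id_apply] at this

lemma mapSub_elemMat_eq {t : ℂ} {a b : Fin n} (hab : a ≠ b) {C : Finset (Fin n)}
    (hC : b ∈ C → a ∈ C) : mapSub (elemMat t a b) (coordSub C) = coordSub C := by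
  have hline : ∀ j : Fin n, Matrix.toLin' (elemMat t a b) (Pi.single j 1) =
      Pi.single j 1 + (t * (if b = j then 1 else 0)) • (Pi.single a 1 : Fin n → ℂ) := by
    intro j
    rw [toLin'_elemMat]
    congr 2
    rw [Pi.single_apply]
  apply le_antisymm
  · rw [mapSub, coordSub, Submodule.map_span, Submodule.span_le]
    rintro _ ⟨_, ⟨j, hj, rfl⟩, rfl⟩
    rw [SetLike.mem_coe, hline j]
    by_cases hjb : b = j
    · subst hjb
      simp only [if_pos rfl, mul_one]
      exact Submodule.add_mem _ (single_mem_coordSub hj)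
        (Submodule.smul_mem _ _ (single_mem_coordSub (hC hj)))
    · simp only [if_neg hjb, mul_zero, zero_smul, add_zero]
      exact single_mem_coordSub hj
  · rw [coordSub, Submodule.span_le]
    rintro _ ⟨j, hj, rfl⟩
    rw [SetLike.mem_coe]
    by_cases hjb : b = j
    · subst hjb
      have hmem1 : Matrix.toLin' (elemMat t a b) (Pi.single a 1) ∈ mapSub (elemMat t a b) (coordSub C) :=
        Submodule.mem_map_of_mem (single_mem_coordSub (hC hj))
      have hmem2 : Matrix.toLin' (elemMat t a b) (Pi.single b 1) ∈ mapSub (elemMat t a b) (coordSub C) :=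
        Submodule.mem_map_of_mem (single_mem_coordSub hj)
      rw [hline a, if_neg (Ne.symm hab), mul_zero, zero_smul, add_zero] at hmem1
      rw [hline b, if_pos rfl, mul_one] at hmem2
      have := Submodule.sub_mem _ hmem2 (Submodule.smul_mem _ t hmem1)
      exact (by simpa using this : Pi.single b 1 ∈ mapSub (elemMat t a b) (coordSub C))
    · have hmem : Matrix.toLin' (elemMat t a b) (Pi.single j 1) ∈ mapSub (elemMat t a b) (coordSub C) :=
        Submodule.mem_map_of_mem (single_mem_coordSub hj)
      rwa [hline j, if_neg hjb, mul_zero, zero_smul, add_zero] at hmem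

lemma coord_rel_of_mem_mapSub {t : ℂ} {a b : Fin n} (hab : a ≠ b) {C : Finset (Fin n)}
    (ha : a ∉ C) {v : Fin n → ℂ} (hv : v ∈ mapSub (elemMat t a b) (coordSub C)) :
    v a = t * v b := by
  obtain ⟨x, hx, rfl⟩ := hv
  rw [toLin'_elemMat]
  simp only [Pi.add_apply, Pi.smul_apply, smul_eq_mul]
  rw [coordSub_apply_eq_zero hx ha, Pi.single_eq_same, Pi.single_eq_of_ne (Ne.symm hab)]
  ring

lemma elemMat_param_eq {t t' : ℂ} {a b : Fin n} (hab : a ≠ b) {C : Finset (Fin n)}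
    (hb : b ∈ C) (ha : a ∉ C)
    (h : mapSub (elemMat t a b) (coordSub C) = mapSub (elemMat t' a b) (coordSub C)) :
    t = t' := by
  have hv : Matrix.toLin' (elemMat t a b) (Pi.single b 1) ∈ mapSub (elemMat t' a b) (coordSub C) := by
    rw [← h]
    exact Submodule.mem_map_of_mem (single_mem_coordSub hb)
  have := coord_rel_of_mem_mapSub hab ha hv
  rw [toLin'_elemMat] at this
  simp only [Pi.add_apply, Pi.smul_apply, smul_eq_mul, Pi.single_eq_same,
    Pi.single_eq_of_ne (Ne.symm hab), Pi.single_eq_of_ne hab] at this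
  simpa using this









section B
variable {n l : ℕ} (aa : Fin l → ℕ) (haa : ∀ k, aa k + 1 < n)

/-- `a_k = w_k(i_k)`. -/
def pA (k : Fin l) : Fin n := (wordProd n aa (k : ℕ)) ⟨aa k, Nat.lt_of_succ_lt (haa k)⟩
/-- `b_k = w_k(i_k+1)`. -/
def pB (k : Fin l) : Fin n := (wordProd n aa (k : ℕ)) ⟨aa k + 1, haa k⟩

lemma mem_iseg {j : ℕ} {a : Fin n} : a ∈ iseg n j ↔ (a : ℕ) < j := by simp [iseg]

lemma pA_lt_pB (hred : invCount (wordProd n aa l) = l) (k : Fin l) :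
    pA aa haa k < pB aa haa k := prefix_ascent aa haa hred k

lemma pB_mem (k : Fin l) : pB aa haa k ∈ chamberSet n aa k := by
  rw [chamberSet, Finset.mem_image]
  refine ⟨⟨aa k, Nat.lt_of_succ_lt (haa k)⟩, mem_iseg.2 (Nat.lt_succ_self _), ?_⟩
  rw [swap_fact aa haa k, Equiv.Perm.mul_apply, Equiv.swap_apply_left]
  rfl

lemma pA_not_mem (k : Fin l) : pA aa haa k ∉ chamberSet n aa k := by
  intro hmem
  rw [chamberSet, Finset.mem_image] at hmem
  obtain ⟨z, hz, hzeq⟩ := hmem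
  have h2 : wordProd n aa ((k:ℕ)+1) (⟨aa k + 1, haa k⟩ : Fin n) = pA aa haa k := by
    rw [swap_fact aa haa k, Equiv.Perm.mul_apply, Equiv.swap_apply_right]
    rfl
  have hz2 : z = (⟨aa k + 1, haa k⟩ : Fin n) :=
    (wordProd n aa ((k:ℕ)+1)).injective (by rw [hzeq, h2])
  rw [hz2, mem_iseg] at hz
  exact absurd hz (by simp)

lemma stab_mem (hred : invCount (wordProd n aa l) = l) (k s : Fin l) (hks : (k:ℕ) < (s:ℕ))
    (hmem : pB aa haa s ∈ chamberSet n aa k) : pA aa haa s ∈ chamberSet n aa k := by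
  have hws : wordProd n aa (s:ℕ) = wordProd n aa ((k:ℕ)+1) * seg aa ((k:ℕ)+1) (s:ℕ) := by
    rw [seg]
    group
  have hasc : seg aa (n := n) ((k:ℕ)+1) (s:ℕ) ⟨aa s, Nat.lt_of_succ_lt (haa s)⟩ <
      seg aa (n := n) ((k:ℕ)+1) (s:ℕ) ⟨aa s + 1, haa s⟩ := by
    have := mid_ascent aa haa hred (j := (k:ℕ)+1) (k := (s:ℕ)) hks s.isLt
    simpa [Fin.eta] using this
  rw [chamberSet, Finset.mem_image] at hmem ⊢
  obtain ⟨z, hz, hzeq⟩ := hmem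
  rw [pB, hws, Equiv.Perm.mul_apply] at hzeq
  have hz2 : z = seg aa ((k:ℕ)+1) (s:ℕ) ⟨aa s + 1, haa s⟩ :=
    (wordProd n aa ((k:ℕ)+1)).injective hzeq
  rw [hz2, mem_iseg] at hz
  refine ⟨seg aa ((k:ℕ)+1) (s:ℕ) ⟨aa s, Nat.lt_of_succ_lt (haa s)⟩, ?_, ?_⟩
  · rw [mem_iseg]
    have : (seg aa (n := n) ((k:ℕ)+1) (s:ℕ) ⟨aa s, Nat.lt_of_succ_lt (haa s)⟩ : ℕ) <
        (seg aa (n := n) ((k:ℕ)+1) (s:ℕ) ⟨aa s + 1, haa s⟩ : ℕ) := hasc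
    omega
  · rw [pA, hws, Equiv.Perm.mul_apply]

lemma main_b (hred : invCount (wordProd n aa l) = l) :
    Function.Injective fun t : Fin l → ℂ => fun k : Fin l =>
      mapSub ((List.ofFn fun s : Fin l => elemMat (t s) (pA aa haa s) (pB aa haa s)).prod)
        (coordSub (chamberSet n aa k)) := by
  intro t t' h
  have hk0 : ∀ k : Fin l,
      mapSub ((List.ofFn fun s : Fin l => elemMat (t s) (pA aa haa s) (pB aa haa s)).prod)
        (coordSub (chamberSet n aa k)) =
      mapSub ((List.ofFn fun s : Fin l => elemMat (t' s) (pA aa haa s) (pB aa haa s)).prod)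
        (coordSub (chamberSet n aa k)) := fun k => congrFun h k
  have main : ∀ m : ℕ, ∀ k : Fin l, (k : ℕ) = m → t k = t' k := by
    intro m
    induction m using Nat.strong_induction_on with
    | _ m ih =>
      intro k hkm
      subst hkm
      have prior : ∀ j : Fin l, (j:ℕ) < (k:ℕ) → t j = t' j := fun j hj => ih _ hj j rfl
      -- dropfix
      have dropfix : ∀ (τ : Fin l → ℂ) (d : ℕ), (k:ℕ) < l - d →
          mapSub (((List.ofFn fun s : Fin l =>
              elemMat (τ s) (pA aa haa s) (pB aa haa s)).drop (l - d)).prod)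
            (coordSub (chamberSet n aa k)) = coordSub (chamberSet n aa k) := by
        intro τ d
        induction d with
        | zero =>
          intro _
          rw [Nat.sub_zero,
            List.drop_of_length_le (by simp), List.prod_nil, mapSub_one]
        | succ d ihd =>
          intro hkd
          have hml : l - (d+1) < l := by omega
          have hm1 : l - (d+1) + 1 = l - d := by omega
          rw [List.drop_eq_getElem_cons (by simpa using hml), List.prod_cons, mapSub_mul,
            hm1, ihd (by omega)]
          rw [List.getElem_ofFn]
          have hkm2 : (k:ℕ) < ((⟨l - (d+1), hml⟩ : Fin l) : ℕ) := by
            simpa using hkd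
          exact mapSub_elemMat_eq
            (ne_of_lt (pA_lt_pB aa haa hred _))
            (stab_mem aa haa hred k _ hkm2)
      have hdropfix : ∀ τ : Fin l → ℂ,
          mapSub (((List.ofFn fun s : Fin l =>
              elemMat (τ s) (pA aa haa s) (pB aa haa s)).drop ((k:ℕ)+1)).prod)
            (coordSub (chamberSet n aa k)) = coordSub (chamberSet n aa k) := by
        intro τ
        have hkl := k.isLt
        have := dropfix τ (l - ((k:ℕ)+1)) (by omega)
        rwa [show l - (l - ((k:ℕ)+1)) = (k:ℕ)+1 by omega] at this
      have hsplit : ∀ τ : Fin l → ℂ,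
          mapSub ((List.ofFn fun s : Fin l =>
              elemMat (τ s) (pA aa haa s) (pB aa haa s)).prod)
            (coordSub (chamberSet n aa k)) =
          mapSub (((List.ofFn fun s : Fin l =>
              elemMat (τ s) (pA aa haa s) (pB aa haa s)).take (k:ℕ)).prod)
            (mapSub (elemMat (τ k) (pA aa haa k) (pB aa haa k))
              (coordSub (chamberSet n aa k))) := by
        intro τ
        conv_lhs => rw [← List.prod_take_mul_prod_drop
          (List.ofFn fun s : Fin l => elemMat (τ s) (pA aa haa s) (pB aa haa s)) ((k:ℕ)+1)]
        rw [mapSub_mul, hdropfix τ, List.prod_take_succ _ (k:ℕ) (by simp), mapSub_mul,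
          List.getElem_ofFn]
      have htake : ((List.ofFn fun s : Fin l =>
            elemMat (t s) (pA aa haa s) (pB aa haa s)).take (k:ℕ)) =
          ((List.ofFn fun s : Fin l =>
            elemMat (t' s) (pA aa haa s) (pB aa haa s)).take (k:ℕ)) := by
        apply List.ext_getElem (by simp)
        intro i h1 h2
        rw [List.getElem_take, List.getElem_take, List.getElem_ofFn, List.getElem_ofFn]
        have hik : i < (k:ℕ) := by
          simpa using lt_of_lt_of_le h1 (by simp [List.length_take])
        rw [prior ⟨i, by omega⟩ hik]
      have hunit : IsUnit (((List.ofFn fun s : Fin l =>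
          elemMat (t' s) (pA aa haa s) (pB aa haa s)).take (k:ℕ)).prod) := by
        apply List.prod_isUnit
        intro M hM
        have hM' := List.mem_of_mem_take hM
        obtain ⟨s, rfl⟩ := List.mem_ofFn.mp hM'
        exact isUnit_elemMat (ne_of_lt (pA_lt_pB aa haa hred s))
      have heq := hk0 k
      rw [hsplit t, hsplit t', htake] at heq
      simp only [mapSub] at heq
      have heq2 := Submodule.map_injective_of_injective (injective_toLin'_of_isUnit hunit) heq
      exact elemMat_param_eq (ne_of_lt (pA_lt_pB aa haa hred k)) (pB_mem aa haa k)
        (pA_not_mem aa haa k) heq2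
  funext k
  exact main (k:ℕ) k rfl
end B

end AuxLemmas

/-- **Parametrization of the dense orbit of a Bott–Samelson configuration.**  For a reduced
word (letters written 0-based) with chamber sets `C_k`, roots `a_k = w_{k-1}(i_k)`,
`b_k = w_{k-1}(i_k+1)`:  (a) `a_k < b_k`, the pairs `(a_k,b_k)` are pairwise distinct and
are exactly the pairs `(a,b)` with `a < b` and `w⁻¹(a) > w⁻¹(b)`;  (b) the map
`t ↦ (g(t)·E_{C_1},…,g(t)·E_{C_l})` with `g(t) = (I + t_1 e_{a_1b_1})⋯(I + t_l e_{a_lb_l})`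
is injective. -/
theorem dense_orbit_parametrization
    (n l : ℕ) (aa : Fin l → ℕ) (haa : ∀ k, aa k + 1 < n)
    (hred : invCount (wordProd n aa l) = l) :
    (∀ k : Fin l,
        (wordProd n aa (k : ℕ)) ⟨aa k, Nat.lt_of_succ_lt (haa k)⟩ <
          (wordProd n aa (k : ℕ)) ⟨aa k + 1, haa k⟩)
    ∧ Function.Injective (fun k : Fin l =>
        (((wordProd n aa (k : ℕ)) ⟨aa k, Nat.lt_of_succ_lt (haa k)⟩ : Fin n),
          ((wordProd n aa (k : ℕ)) ⟨aa k + 1, haa k⟩ : Fin n)))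
    ∧ Set.range (fun k : Fin l =>
        (((wordProd n aa (k : ℕ)) ⟨aa k, Nat.lt_of_succ_lt (haa k)⟩ : Fin n),
          ((wordProd n aa (k : ℕ)) ⟨aa k + 1, haa k⟩ : Fin n)))
        = {pr : Fin n × Fin n | pr.1 < pr.2 ∧
            (wordProd n aa l).symm pr.2 < (wordProd n aa l).symm pr.1}
    ∧ Function.Injective fun t : Fin l → ℂ => fun k : Fin l =>
        mapSub
          ((List.ofFn fun s : Fin l =>
              (1 : Matrix (Fin n) (Fin n) ℂ) +
                t s • Matrix.single
                  ((wordProd n aa (s : ℕ)) ⟨aa s, Nat.lt_of_succ_lt (haa s)⟩)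
                  ((wordProd n aa (s : ℕ)) ⟨aa s + 1, haa s⟩) (1 : ℂ)).prod)
          (coordSub (chamberSet n aa k)) := by
  exact ⟨prefix_ascent aa haa hred, pair_injective aa haa hred, pair_range aa haa hred,
    main_b aa haa hred⟩

end BottSamelson
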